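/- Let H ⊆ G_e be a subgroup and let j, k ≥ 2 be integers with j + k − 1 ≤ e. Then for all A ∈ W_j(H) and B ∈ W_k(H), the Lie bracket [A,B] = AB − BA belongs to W_{j+k−1}(H); that is, [W_j(H), W_k(H)] ⊆ W_{j+k−1}(H). -/

import Mathlib

set_option synthInstance.maxHeartbeats 400000
set_option maxHeartbeats 1000000

noncomputable section

namespace Paper

/-- The unipotent upper-triangular subgroup `U = {[[1,x],[0,1]]}` of `SL₂(R)`. -/
def unipotent (R : Type*) [CommRing R] : Subgroup (Matrix.SpecialLinearGroup (Fin 2) R) where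
  carrier := {g | g.1 0 0 = 1 ∧ g.1 1 0 = 0 ∧ g.1 1 1 = 1}
  one_mem' := by
    refine ⟨?_, ?_, ?_⟩ <;> simp [Matrix.SpecialLinearGroup.coe_one, Matrix.one_apply]
  mul_mem' := by
    rintro a b ⟨ha1, ha2, ha3⟩ ⟨hb1, hb2, hb3⟩
    refine ⟨?_, ?_, ?_⟩ <;>
      simp [Matrix.SpecialLinearGroup.coe_mul, Matrix.mul_apply, Fin.sum_univ_two,
        ha1, ha2, ha3, hb1, hb2, hb3]
  inv_mem' := by
    rintro a ⟨h1, h2, h3⟩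
    refine ⟨?_, ?_, ?_⟩ <;>
      simp [Matrix.SpecialLinearGroup.coe_inv, Matrix.adjugate_fin_two, h1, h2, h3]

/-- `χ(H) = |H\(G/U)| / [G:H]` for `G = SL₂(R)` acting on `X = G/U`,
`U` the unipotent subgroup: the number of `H`-orbits on `X` divided by the index of `H`. -/
def chi (R : Type*) [CommRing R] (H : Subgroup (Matrix.SpecialLinearGroup (Fin 2) R)) : ℝ :=
  (Nat.card (Quotient (MulAction.orbitRel H
      (Matrix.SpecialLinearGroup (Fin 2) R ⧸ unipotent R))) : ℝ) / (H.index : ℝ)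

variable (K : Type*) [Field K] [NumberField K]

/-- The reduction map `SL₂(𝓞_K/𝔭^e) → SL₂(𝓞_K/𝔭^j)` for `j ≤ e`. -/
def red (𝔭 : Ideal (NumberField.RingOfIntegers K)) (e j : ℕ) (h : j ≤ e) :
    Matrix.SpecialLinearGroup (Fin 2) (NumberField.RingOfIntegers K ⧸ 𝔭 ^ e) →*
      Matrix.SpecialLinearGroup (Fin 2) (NumberField.RingOfIntegers K ⧸ 𝔭 ^ j) :=
  Matrix.SpecialLinearGroup.map (Ideal.Quotient.factor (S := 𝔭 ^ e) (T := 𝔭 ^ j) (Ideal.pow_le_pow_right h))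

/-- A subgroup `H ⊆ SL₂(𝓞_K/𝔭^e)` has exact level `e`:
`H ≠ ρ_{e,e-1}⁻¹(ρ_{e,e-1}(H))` when `e > 1`, and `H ≠ G₁` when `e = 1`. -/
def ExactLevel (𝔭 : Ideal (NumberField.RingOfIntegers K)) (e : ℕ)
    (H : Subgroup (Matrix.SpecialLinearGroup (Fin 2) (NumberField.RingOfIntegers K ⧸ 𝔭 ^ e))) :
    Prop :=
  if e = 1 then H ≠ ⊤
  else H ≠ Subgroup.comap (red K 𝔭 e (e - 1) (Nat.sub_le e 1))
    (Subgroup.map (red K 𝔭 e (e - 1) (Nat.sub_le e 1)) H)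

end Paper

open Paper

namespace Paper

/-- The Lie image at level `j` of a subgroup `H ⊆ SL₂(𝓞_K/𝔭^e)`:
`W_j(H) = {A ∈ sl₂(F_q) | ∃ n ∈ N_j(H), n ≡ I + ϖ^{j-1}Alift (mod ϖ^j), Alift ≡ A (mod ϖ)}`,
where `N_j(H) = ker (ρ_{e,j-1}|_H)` and `ϖ` is a uniformizer of `𝔭`. -/
def Wset (K : Type*) [Field K] [NumberField K]
    (𝔭 : Ideal (NumberField.RingOfIntegers K)) (ϖ : NumberField.RingOfIntegers K)
    (e j : ℕ) (he : e ≠ 0) (hj : j - 1 ≤ e)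
    (H : Subgroup (Matrix.SpecialLinearGroup (Fin 2) (NumberField.RingOfIntegers K ⧸ 𝔭 ^ e))) :
    Set (Matrix (Fin 2) (Fin 2) (NumberField.RingOfIntegers K ⧸ 𝔭)) :=
  {A | Matrix.trace A = 0 ∧
    ∃ n, n ∈ H ∧ red K 𝔭 e (j - 1) hj n = 1 ∧
      ∃ Alift : Matrix (Fin 2) (Fin 2) (NumberField.RingOfIntegers K ⧸ 𝔭 ^ e),
        (∀ a b, Ideal.Quotient.factor (S := 𝔭 ^ e) (T := 𝔭) (Ideal.pow_le_self he) (Alift a b) = A a b) ∧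
        (∀ a b, (n.1 - 1) a b - (Ideal.Quotient.mk (𝔭 ^ e) ϖ) ^ (j - 1) * Alift a b ∈
          (Ideal.map (Ideal.Quotient.mk (𝔭 ^ e)) 𝔭) ^ j)}

/-- `W_j(H)` together with the convention `W_i(H) := sl₂(F_q)` for `i ≥ e + 1`. -/
def WsetC (K : Type*) [Field K] [NumberField K]
    (𝔭 : Ideal (NumberField.RingOfIntegers K)) (ϖ : NumberField.RingOfIntegers K)
    (e i : ℕ) (he : e ≠ 0)
    (H : Subgroup (Matrix.SpecialLinearGroup (Fin 2) (NumberField.RingOfIntegers K ⧸ 𝔭 ^ e))) :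
    Set (Matrix (Fin 2) (Fin 2) (NumberField.RingOfIntegers K ⧸ 𝔭)) :=
  if h : i ≤ e then Wset K 𝔭 ϖ e i he (le_trans (Nat.sub_le i 1) h) H
  else {A | Matrix.trace A = 0}

end Paper

/-!
Write `g = 1 + X` and `h = 1 + Y` with `X ≡ π ^ p A` modulo `𝔪 ^ (p + 1)` and `Y ≡ π ^ q B`
modulo `𝔪 ^ (q + 1)`, where `π ∈ 𝔪` and `p, q ≥ 1`. Then `g h g⁻¹ h⁻¹ - 1 = (X Y - Y X) (h g)⁻¹`
with `(h g)⁻¹ ≡ 1` modulo `𝔪`, and `X Y ≡ π ^ (p + q) A B` modulo `𝔪 ^ (p + q + 1)`, so the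
commutator is `≡ 1 + π ^ (p + q) (A B - B A)`. In `𝓞_K / 𝔭 ^ e`, with `𝔪` the image of `𝔭`,
`p = j - 1` and `q = k - 1`, the commutator of the witnesses of `A` and `B` in `H` therefore
witnesses `[A, B] ∈ W_{j+k-1}(H)`.
-/

namespace Ideal

variable {R : Type*} [CommRing R] {n : Type*} [Fintype n] [DecidableEq n] {I : Ideal R} {π : R}

theorem matrix_pow_le_matrix_pow (I : Ideal R) {s t : ℕ} (h : s ≤ t) :
    (I ^ t).matrix n ≤ (I ^ s).matrix n :=
  matrix_monotone n (pow_le_pow_right h)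

theorem mul_mem_matrix_mul {J : Ideal R} {X Y : Matrix n n R}
    (hX : X ∈ I.matrix n) (hY : Y ∈ J.matrix n) : X * Y ∈ (I * J).matrix n := fun i k =>
  Ideal.sum_mem _ fun l _ => mul_mem_mul (hX i l) (hY l k)

theorem mul_mem_matrix_pow {r s t : ℕ} (h : r ≤ s + t) {X Y : Matrix n n R}
    (hX : X ∈ (I ^ s).matrix n) (hY : Y ∈ (I ^ t).matrix n) : X * Y ∈ (I ^ r).matrix n :=
  I.matrix_pow_le_matrix_pow h (pow_add I s t ▸ mul_mem_matrix_mul hX hY)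

theorem smul_mem_matrix (hπ : π ∈ I) (A : Matrix n n R) : π • A ∈ I.matrix n :=
  (mem_matrix n I _).2 fun i j => I.mul_mem_right (A i j) hπ

theorem mem_matrix_pow_of_sub_smul_mem (hπ : π ∈ I) {p : ℕ} {X A : Matrix n n R}
    (hX : X - π ^ p • A ∈ (I ^ (p + 1)).matrix n) : X ∈ (I ^ p).matrix n := by
  simpa using add_mem (I.matrix_pow_le_matrix_pow p.le_succ hX)
    (smul_mem_matrix (pow_mem_pow hπ p) A)

theorem mul_sub_smul_mul_mem_matrix_pow (hπ : π ∈ I) {p q : ℕ} {X Y A B : Matrix n n R}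
    (hX : X - π ^ p • A ∈ (I ^ (p + 1)).matrix n) (hY : Y - π ^ q • B ∈ (I ^ (q + 1)).matrix n) :
    X * Y - π ^ (p + q) • (A * B) ∈ (I ^ (p + q + 1)).matrix n := by
  have hsplit : X * Y - π ^ (p + q) • (A * B)
      = (X - π ^ p • A) * Y + π ^ p • A * (Y - π ^ q • B) := by
    simp only [sub_mul, mul_sub, smul_mul_assoc, mul_smul_comm, pow_add, mul_smul,
      smul_comm (π ^ q) (π ^ p)]
    abel
  rw [hsplit]
  exact add_mem (mul_mem_matrix_pow (by omega) hX (mem_matrix_pow_of_sub_smul_mem hπ hY))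
    (mul_mem_matrix_pow (by omega) (smul_mem_matrix (pow_mem_pow hπ p) A) hY)

end Ideal

namespace Matrix.SpecialLinearGroup

open scoped commutatorElement

variable {n : Type*} [Fintype n] [DecidableEq n] {R S : Type*} [CommRing R] [CommRing S]
  {I : Ideal R} {π : R}

theorem map_eq_one_iff (f : R →+* S) (g : SpecialLinearGroup n R) :
    map f g = 1 ↔ (g : Matrix n n R) - 1 ∈ (RingHom.ker f).matrix n := by
  simp only [SpecialLinearGroup.ext_iff, map_apply_coe, RingHom.mapMatrix_apply, map_apply,
    coe_one, Ideal.mem_matrix, sub_apply, RingHom.mem_ker, map_sub, sub_eq_zero]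
  refine forall₂_congr fun i j => ?_
  rw [one_apply, one_apply, apply_ite f, map_one, map_zero]

theorem map_mk_eq_one_of_sub_smul_mem (hπ : π ∈ I) {p : ℕ} (hp : p ≠ 0)
    {g : SpecialLinearGroup n R} {A : Matrix n n R}
    (hg : (g : Matrix n n R) - 1 - π ^ p • A ∈ (I ^ (p + 1)).matrix n) :
    map (Ideal.Quotient.mk I) g = 1 := by
  rw [map_eq_one_iff, Ideal.mk_ker, ← pow_one I]
  exact I.matrix_pow_le_matrix_pow (by omega) (Ideal.mem_matrix_pow_of_sub_smul_mem hπ hg)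

theorem commutatorElement_sub_one_sub_smul_mem (hπ : π ∈ I) {p q : ℕ} (hp : p ≠ 0)
    (hq : q ≠ 0) {g h : SpecialLinearGroup n R} {A B : Matrix n n R}
    (hg : (g : Matrix n n R) - 1 - π ^ p • A ∈ (I ^ (p + 1)).matrix n)
    (hh : (h : Matrix n n R) - 1 - π ^ q • B ∈ (I ^ (q + 1)).matrix n) :
    ((⁅g, h⁆ : SpecialLinearGroup n R) : Matrix n n R) - 1 - π ^ (p + q) • (A * B - B * A) ∈
      (I ^ (p + q + 1)).matrix n := by
  set X := (g : Matrix n n R) - 1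
  set Y := (h : Matrix n n R) - 1
  set u := (h * g)⁻¹
  have hu : (u : Matrix n n R) - 1 ∈ (I ^ 1).matrix n := by
    rw [pow_one, ← Ideal.mk_ker (I := I), ← map_eq_one_iff]
    simp [u, map_mk_eq_one_of_sub_smul_mem hπ hp hg,
      map_mk_eq_one_of_sub_smul_mem hπ hq hh]
  have hcomm : ((⁅g, h⁆ : SpecialLinearGroup n R) : Matrix n n R) - 1 = (X * Y - Y * X) * u := by
    have h1 : ⁅g, h⁆ = g * h * u := by simp [u, commutatorElement_def, mul_assoc]
    have h2 : (1 : SpecialLinearGroup n R) = h * g * u := by simp [u]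
    rw [h1, ← coe_one, h2]
    simp only [coe_mul, X, Y]
    noncomm_ring
  have hX := Ideal.mem_matrix_pow_of_sub_smul_mem hπ hg
  have hY := Ideal.mem_matrix_pow_of_sub_smul_mem hπ hh
  have hXY := Ideal.mul_sub_smul_mul_mem_matrix_pow hπ hg hh
  have hYX := Ideal.mul_sub_smul_mul_mem_matrix_pow hπ hh hg
  rw [add_comm q p] at hYX
  have hsplit : ((⁅g, h⁆ : SpecialLinearGroup n R) : Matrix n n R) - 1
        - π ^ (p + q) • (A * B - B * A)
      = (X * Y - π ^ (p + q) • (A * B)) - (Y * X - π ^ (p + q) • (B * A))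
        + (X * Y - Y * X) * (u - 1) := by
    rw [hcomm, smul_sub]
    noncomm_ring
  rw [hsplit]
  have hXY_YX : X * Y - Y * X ∈ (I ^ (p + q)).matrix n :=
    sub_mem (Ideal.mul_mem_matrix_pow le_rfl hX hY) (Ideal.mul_mem_matrix_pow (by omega) hY hX)
  exact add_mem (sub_mem hXY hYX) (Ideal.mul_mem_matrix_pow le_rfl hXY_YX hu)

end Matrix.SpecialLinearGroup

theorem Paper.red_eq_one_iff {K : Type*} [Field K] [NumberField K]
    {𝔭 : Ideal (NumberField.RingOfIntegers K)} {e t : ℕ} (h : t ≤ e)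
    (g : Matrix.SpecialLinearGroup (Fin 2) (NumberField.RingOfIntegers K ⧸ 𝔭 ^ e)) :
    red K 𝔭 e t h g = 1 ↔
      (g : Matrix (Fin 2) (Fin 2) _) - 1 ∈
        ((𝔭.map (Ideal.Quotient.mk (𝔭 ^ e))) ^ t).matrix (Fin 2) := by
  rw [red, Matrix.SpecialLinearGroup.map_eq_one_iff, Ideal.Quotient.factor_ker, Ideal.map_pow]

open Matrix.SpecialLinearGroup
open scoped commutatorElement

/-- Lemma `lie-bracket`.
For `j, k ≥ 2` with `j + k - 1 ≤ e`, one has `[W_j(H), W_k(H)] ⊆ W_{j+k-1}(H)`. -/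
theorem statement8 (K : Type*) [Field K] [NumberField K]
    (𝔭 : Ideal (NumberField.RingOfIntegers K))
    (ϖ : NumberField.RingOfIntegers K) (hϖ : ϖ ∈ 𝔭)
    (e j k : ℕ) (hj : 2 ≤ j) (hk : 2 ≤ k) (hjk : j + k - 1 ≤ e)
    (H : Subgroup (Matrix.SpecialLinearGroup (Fin 2) (NumberField.RingOfIntegers K ⧸ 𝔭 ^ e))) :
    ∀ A ∈ Wset K 𝔭 ϖ e j (by omega) (by omega) H,
      ∀ B ∈ Wset K 𝔭 ϖ e k (by omega) (by omega) H,
        A * B - B * A ∈ Wset K 𝔭 ϖ e (j + k - 1) (by omega) (by omega) H := by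
  obtain ⟨p, rfl⟩ : ∃ p, j = p + 1 := ⟨j - 1, by omega⟩
  obtain ⟨q, rfl⟩ : ∃ q, k = q + 1 := ⟨k - 1, by omega⟩
  have hπ : Ideal.Quotient.mk (𝔭 ^ e) ϖ ∈ 𝔭.map (Ideal.Quotient.mk (𝔭 ^ e)) :=
    Ideal.mem_map_of_mem _ hϖ
  rintro A ⟨-, g, hgH, -, A', hA', hg⟩ B ⟨-, h, hhH, -, B', hB', hh⟩
  have hcomm := commutatorElement_sub_one_sub_smul_mem hπ (p := p) (q := q) (by omega) (by omega)
    (g := g) (h := h) (A := A') (B := B')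
    ((Ideal.mem_matrix _ _ _).2 fun a b => by simpa using hg a b)
    ((Ideal.mem_matrix _ _ _).2 fun a b => by simpa using hh a b)
  have hlevel : p + 1 + (q + 1) - 1 - 1 = p + q := by omega
  have hlevel' : p + 1 + (q + 1) - 1 = p + q + 1 := by omega
  refine ⟨by rw [Matrix.trace_sub, Matrix.trace_mul_comm, sub_self], ⁅g, h⁆,
    by simpa only [commutatorElement_def] using
      mul_mem (mul_mem (mul_mem hgH hhH) (inv_mem hgH)) (inv_mem hhH),
    ?_, A' * B' - B' * A', ?_, fun a b => by rw [hlevel, hlevel']; exact hcomm a b⟩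
  · rw [Paper.red_eq_one_iff, hlevel]
    exact Ideal.mem_matrix_pow_of_sub_smul_mem hπ hcomm
  · simp only [Matrix.sub_apply, Matrix.mul_apply, map_sub, map_sum, map_mul, hA', hB',
      implies_true]
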